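/- arXiv:2203.15994 — 6 statements merged into one kernel-verified Lean document; each statement's English description precedes it below -/
import Mathlib

section
/- Let K be a compact subset of X and w ∈ ℝ^m with K_w nonempty. Then the map ε ↦ R(K(w,ε))_X is nonincreasing on (0,∞) and lim_{ε→0⁺} R(K(w,ε))_X = R(K_w)_X. -/
open Filter Topology

/-- Chebyshev radius of a set `S` in a normed space `X`:
`R(S) = inf_{z ∈ X} sup_{f ∈ S} ‖f - z‖`. -/
noncomputable def chebRad {X : Type*} [NormedAddCommGroup X] (S : Set X) : ℝ :=
  ⨅ z : X, ⨆ f : S, ‖(f : X) - z‖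

/-- Weighted euclidean norm on `ℝ^m`: `‖v‖ = ( m⁻¹ ∑ v_j² )^{1/2}`. -/
noncomputable def wNorm {m : ℕ} (v : Fin m → ℝ) : ℝ :=
  Real.sqrt ((∑ j, v j ^ 2) / m)

section Aux

variable {X : Type*} [NormedAddCommGroup X]

lemma bddAbove_aux {S : Set X} (hS : Bornology.IsBounded S) (z : X) :
    BddAbove (Set.range fun f : S => ‖(f : X) - z‖) := by
  obtain ⟨C, hC⟩ := isBounded_iff_forall_norm_le.1 hS
  refine ⟨C + ‖z‖, ?_⟩
  rintro x ⟨f, rfl⟩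
  calc ‖(f : X) - z‖ ≤ ‖(f : X)‖ + ‖z‖ := norm_sub_le _ _
    _ ≤ C + ‖z‖ := by gcongr; exact hC f f.2

lemma sup_nonneg_aux {S : Set X} (hS : S.Nonempty) (hb : Bornology.IsBounded S) (z : X) :
    0 ≤ ⨆ f : S, ‖(f : X) - z‖ := by
  obtain ⟨f₀, hf₀⟩ := hS
  exact le_trans (norm_nonneg _) (le_ciSup (bddAbove_aux hb z) ⟨f₀, hf₀⟩)

lemma chebRad_mono_aux {S T : Set X} (hT : Bornology.IsBounded T) (hS : S.Nonempty)
    (hST : S ⊆ T) : chebRad S ≤ chebRad T := by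
  haveI : Nonempty S := hS.to_subtype
  refine ciInf_mono ⟨0, ?_⟩ fun z => ?_
  · rintro x ⟨z, rfl⟩
    exact sup_nonneg_aux hS (hT.subset hST) z
  · exact ciSup_le fun f => le_ciSup (bddAbove_aux hT z) ⟨(f : X), hST f.2⟩

end Aux

/-- Let `K` be a compact subset of `X` and `w ∈ ℝ^m` with `K_w` nonempty.  Then
`ε ↦ R(K(w,ε))` is nondecreasing in `ε` on `(0,∞)` (i.e. nonincreasing as `ε ↓ 0`)
and `lim_{ε→0⁺} R(K(w,ε)) = R(K_w)`. -/
theorem stmt_0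
    {X : Type*} [NormedAddCommGroup X] [NormedSpace ℝ X] [CompleteSpace X]
    {m : ℕ} (hm : 0 < m)
    (lam : Fin m → X →L[ℝ] ℝ) (hlam : ∀ j, ‖lam j‖ ≤ 1)
    (K : Set X) (hK : IsCompact K) (w : Fin m → ℝ)
    (hne : {f ∈ K | ∀ j, lam j f = w j}.Nonempty) :
    MonotoneOn (fun ε : ℝ =>
        chebRad {f ∈ K | wNorm (fun j => lam j f - w j) ≤ ε}) (Set.Ioi 0) ∧
    Tendsto (fun ε : ℝ =>
        chebRad {f ∈ K | wNorm (fun j => lam j f - w j) ≤ ε})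
      (𝓝[>] 0) (𝓝 (chebRad {f ∈ K | ∀ j, lam j f = w j})) := by
  set φ : X → ℝ := fun f => wNorm (fun j => lam j f - w j) with hφdef
  set Kw : Set X := {f ∈ K | ∀ j, lam j f = w j} with hKwdef
  set A : ℝ → Set X := fun ε => {f ∈ K | φ f ≤ ε} with hAdef
  -- basic facts about φ
  have hφcont : Continuous φ := by
    apply Real.continuous_sqrt.comp
    exact (continuous_finset_sum _ fun j _ =>
      (((lam j).continuous.sub continuous_const).pow 2)).div_const _
  have hφnonneg : ∀ f, 0 ≤ φ f := fun f => Real.sqrt_nonneg _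
  have hφzero : ∀ f, φ f = 0 ↔ ∀ j, lam j f = w j := by
    intro f
    constructor
    · intro h j
      have h1 : (∑ j, (lam j f - w j) ^ 2) / m ≤ 0 := Real.sqrt_eq_zero'.1 h
      have h2 : (0:ℝ) ≤ ∑ j, (lam j f - w j) ^ 2 :=
        Finset.sum_nonneg fun j _ => sq_nonneg _
      have h3 : (∑ j, (lam j f - w j) ^ 2) = 0 := by
        have hm' : (0:ℝ) < m := by exact_mod_cast hm
        rcases h2.lt_or_eq with hlt | heq
        · exact absurd h1 (not_le.2 (div_pos hlt hm'))
        · exact heq.symm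
      have := (Finset.sum_eq_zero_iff_of_nonneg
        (fun j _ => sq_nonneg (lam j f - w j))).1 h3 j (Finset.mem_univ j)
      have := pow_eq_zero_iff (n := 2) (by norm_num) |>.1 this
      linarith [sub_eq_zero.1 this]
    · intro h
      have hs : ∑ j, (lam j f - w j) ^ 2 = 0 :=
        Finset.sum_eq_zero fun j _ => by rw [h j]; ring
      simp [hφdef, wNorm, hs]
  -- Kw is compact and contained in every A ε for ε ≥ 0
  have hKwK : Kw ⊆ K := fun f hf => hf.1
  have hKwc : IsCompact Kw := by
    have : Kw = K ∩ ⋂ j, (lam j) ⁻¹' {w j} := by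
      ext f; simp [hKwdef, Set.mem_iInter]
    rw [this]
    exact hK.inter_right (isClosed_iInter fun j => isClosed_singleton.preimage (lam j).continuous)
  have hKwA : ∀ ε : ℝ, 0 ≤ ε → Kw ⊆ A ε := by
    intro ε hε f hf
    exact ⟨hf.1, by rw [(hφzero f).2 hf.2]; exact hε⟩
  have hAK : ∀ ε : ℝ, A ε ⊆ K := fun ε f hf => hf.1
  have hAb : ∀ ε : ℝ, Bornology.IsBounded (A ε) := fun ε => hK.isBounded.subset (hAK ε)
  have hAmono : ∀ ⦃a b : ℝ⦄, a ≤ b → A a ⊆ A b := fun a b hab f hf => ⟨hf.1, hf.2.trans hab⟩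
  -- monotonicity
  have hmono : MonotoneOn (fun ε : ℝ => chebRad (A ε)) (Set.Ioi 0) := by
    intro a ha b hb hab
    exact chebRad_mono_aux (hAb b) (hne.mono (hKwA a (le_of_lt ha))) (hAmono hab)
  refine ⟨hmono, ?_⟩
  set r : ℝ := chebRad Kw with hrdef
  -- key claim
  have key : ∀ δ : ℝ, 0 < δ → ∃ ε : ℝ, 0 < ε ∧ chebRad (A ε) ≤ r + δ := by
    intro δ hδ
    -- choose a good center z for Kw
    haveI : Nonempty Kw := hne.to_subtype
    have hlt : r < r + δ / 2 := by linarith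
    obtain ⟨z, hz⟩ := exists_lt_of_ciInf_lt (f := fun z : X => ⨆ f : Kw, ‖(f : X) - z‖) hlt
    -- find ε such that A ε ⊆ thickening (δ/2) Kw
    have hη : (0:ℝ) < δ / 2 := by linarith
    set U := Metric.thickening (δ / 2) Kw with hUdef
    have hCcomp : IsCompact (K \ U) := hK.diff Metric.isOpen_thickening
    have hsub : ∃ ε : ℝ, 0 < ε ∧ A ε ⊆ U := by
      rcases (K \ U).eq_empty_or_nonempty with hC | hC
      · refine ⟨1, one_pos, fun f hf => ?_⟩
        by_contra hfU
        have hmem : f ∈ K \ U := ⟨hf.1, hfU⟩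
        rw [hC] at hmem
        exact hmem
      · obtain ⟨f₀, hf₀, hmin⟩ := hCcomp.exists_isMinOn hC hφcont.continuousOn
        have hf₀pos : 0 < φ f₀ := by
          rcases lt_or_eq_of_le (hφnonneg f₀) with h | h
          · exact h
          · exfalso
            have : f₀ ∈ Kw := ⟨hf₀.1, (hφzero f₀).1 h.symm⟩
            exact hf₀.2 (Metric.self_subset_thickening hη Kw this)
        refine ⟨φ f₀ / 2, by linarith, fun f hf => ?_⟩
        by_contra hfU
        have : f ∈ K \ U := ⟨hf.1, hfU⟩
        have := hmin this
        simp only [Set.mem_setOf_eq] at this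
        have h2 : φ f ≤ φ f₀ / 2 := hf.2
        linarith
    obtain ⟨ε, hε, hAU⟩ := hsub
    refine ⟨ε, hε, ?_⟩
    haveI : Nonempty (A ε) := (hne.mono (hKwA ε hε.le)).to_subtype
    have hsup : (⨆ f : A ε, ‖(f : X) - z‖) ≤ r + δ := by
      refine ciSup_le fun f => ?_
      obtain ⟨g, hgKw, hgd⟩ := Metric.mem_thickening_iff.1 (hAU f.2)
      have h1 : ‖(f : X) - z‖ ≤ ‖(f : X) - g‖ + ‖g - z‖ := norm_sub_le_norm_sub_add_norm_sub _ _ _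
      have h2 : ‖(f : X) - g‖ < δ / 2 := by rwa [← dist_eq_norm]
      have h3 : ‖g - z‖ ≤ ⨆ f : Kw, ‖(f : X) - z‖ :=
        le_ciSup (bddAbove_aux (hK.isBounded.subset hKwK) z) ⟨g, hgKw⟩
      linarith
    calc chebRad (A ε) ≤ ⨆ f : A ε, ‖(f : X) - z‖ := by
          refine ciInf_le ⟨0, ?_⟩ z
          rintro x ⟨y, rfl⟩
          exact sup_nonneg_aux (hne.mono (hKwA ε hε.le)) (hAb ε) y
      _ ≤ r + δ := hsup
  -- the limit
  rw [Metric.tendsto_nhdsWithin_nhds]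
  intro δ hδ
  obtain ⟨ε₀, hε₀, hle⟩ := key (δ / 2) (by linarith)
  refine ⟨ε₀, hε₀, fun x hx hdx => ?_⟩
  have hx0 : (0:ℝ) < x := hx
  have hxε₀ : x ≤ ε₀ := by
    rw [Real.dist_eq, sub_zero, abs_of_pos hx0] at hdx
    exact hdx.le
  have h1 : r ≤ chebRad (A x) :=
    chebRad_mono_aux (hAb x) hne (hKwA x hx0.le)
  have h2 : chebRad (A x) ≤ chebRad (A ε₀) :=
    chebRad_mono_aux (hAb ε₀) (hne.mono (hKwA x hx0.le)) (hAmono hxε₀)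
  have : chebRad (A x) ≤ r + δ / 2 := h2.trans hle
  rw [Real.dist_eq, abs_of_nonneg (by linarith)]
  linarith
end

section
/- Let K be a compact subset of X, w ∈ ℝ^m, and γ > 0 with K(w,γ) nonempty. Then lim_{ε→0⁺} R(K(w, γ+ε))_X = R(K(w,γ))_X. -/
open Filter Topology

/-- Let `K` be a compact subset of `X`, `w ∈ ℝ^m`, and `γ > 0` with `K(w,γ)` nonempty.
Then `lim_{ε→0⁺} R(K(w, γ+ε)) = R(K(w,γ))`. -/
theorem stmt_1
    {X : Type*} [NormedAddCommGroup X] [NormedSpace ℝ X] [CompleteSpace X]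
    {m : ℕ} (hm : 0 < m)
    (lam : Fin m → X →L[ℝ] ℝ) (hlam : ∀ j, ‖lam j‖ ≤ 1)
    (K : Set X) (hK : IsCompact K) (w : Fin m → ℝ)
    (γ : ℝ) (hγ : 0 < γ)
    (hne : {f ∈ K | wNorm (fun j => lam j f - w j) ≤ γ}.Nonempty) :
    Tendsto (fun ε : ℝ =>
        chebRad {f ∈ K | wNorm (fun j => lam j f - w j) ≤ γ + ε})
      (𝓝[>] 0) (𝓝 (chebRad {f ∈ K | wNorm (fun j => lam j f - w j) ≤ γ})) := by
  classical
  set g : X → ℝ := fun f => wNorm (fun j => lam j f - w j) with hg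
  have gcont : Continuous g := by
    have : Continuous fun f : X => (∑ j, (lam j f - w j) ^ 2) / m :=
      ((continuous_finset_sum _ fun j _ =>
        ((lam j).continuous.sub continuous_const).pow 2)).div_const m
    exact this.sqrt
  -- the family of sets
  set S : ℝ → Set X := fun t => {f ∈ K | g f ≤ t} with hS
  have hSsub : ∀ t, S t ⊆ K := fun t f hf => hf.1
  have hSmono : ∀ {s t : ℝ}, s ≤ t → S s ⊆ S t := fun hst f hf => ⟨hf.1, hf.2.trans hst⟩
  have hS0ne : (S γ).Nonempty := hne
  have hSclosed : ∀ t, IsClosed (S t) := fun t =>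
    hK.isClosed.inter (isClosed_le gcont continuous_const)
  have hScompact : ∀ t, IsCompact (S t) := fun t =>
    hK.of_isClosed_subset (hSclosed t) (hSsub t)
  -- boundedness
  obtain ⟨C, hC⟩ := isBounded_iff_forall_norm_le.mp hK.isBounded
  have hbdd : ∀ (T : Set X), T ⊆ K → ∀ z : X,
      BddAbove (Set.range fun f : T => ‖(f : X) - z‖) := by
    intro T hT z
    refine ⟨C + ‖z‖, ?_⟩
    rintro r ⟨f, rfl⟩
    calc ‖(f : X) - z‖ ≤ ‖(f : X)‖ + ‖z‖ := norm_sub_le _ _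
      _ ≤ C + ‖z‖ := by have := hC f (hT f.2); linarith
  -- the sup function
  have Fnonneg : ∀ (T : Set X), T ⊆ K → T.Nonempty → ∀ z : X,
      0 ≤ ⨆ f : T, ‖(f : X) - z‖ := by
    intro T hT ⟨f0, hf0⟩ z
    exact (norm_nonneg _).trans (le_ciSup (hbdd T hT z) ⟨f0, hf0⟩)
  have hbddBelow : ∀ (T : Set X), T ⊆ K → T.Nonempty →
      BddBelow (Set.range fun z : X => ⨆ f : T, ‖(f : X) - z‖) := by
    intro T hT hTne
    exact ⟨0, by rintro r ⟨z, rfl⟩; exact Fnonneg T hT hTne z⟩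
  have chebnonneg : ∀ (T : Set X), T ⊆ K → T.Nonempty → 0 ≤ chebRad T := by
    intro T hT hTne
    exact le_ciInf fun z => Fnonneg T hT hTne z
  -- monotonicity of chebRad
  have chebmono : ∀ {s t : ℝ}, s ≤ t → (S s).Nonempty → chebRad (S s) ≤ chebRad (S t) := by
    intro s t hst hsne
    refine ciInf_mono (hbddBelow _ (hSsub s) hsne) fun z => ?_
    refine Real.iSup_le (fun f => ?_) (Fnonneg _ (hSsub t) (hsne.mono (hSmono hst)) z)
    exact le_ciSup (hbdd _ (hSsub t) z) ⟨(f : X), hSmono hst f.2⟩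
  -- key estimate: for every δ > 0 there is ε₀ > 0 such that for 0 < ε < ε₀,
  -- every element of S (γ+ε) is δ-close to S γ.
  have key : ∀ δ : ℝ, 0 < δ → ∃ ε₀ > 0, ∀ ε : ℝ, 0 < ε → ε < ε₀ →
      ∀ f ∈ S (γ + ε), ∃ f' ∈ S γ, dist f f' < δ := by
    intro δ hδ
    set T : Set X := {f ∈ K | δ ≤ Metric.infDist f (S γ)} with hT
    have hTclosed : IsClosed T :=
      hK.isClosed.inter (isClosed_le continuous_const (Metric.continuous_infDist_pt _))
    have hTcompact : IsCompact T := hK.of_isClosed_subset hTclosed fun f hf => hf.1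
    have hclose : ∀ f ∈ K, f ∉ T → ∃ f' ∈ S γ, dist f f' < δ := by
      intro f hfK hfT
      have : Metric.infDist f (S γ) < δ := by
        by_contra h
        exact hfT ⟨hfK, le_of_not_gt h⟩
      exact (Metric.infDist_lt_iff hS0ne).mp this
    rcases T.eq_empty_or_nonempty with hTe | hTne
    · refine ⟨1, one_pos, fun ε hε hε1 f hf => ?_⟩
      exact hclose f hf.1 (by simp [hTe])
    · obtain ⟨x0, hx0T, hmin⟩ := hTcompact.exists_isMinOn hTne gcont.continuousOn
      have hμ : γ < g x0 := by
        by_contra h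
        have hx0S : x0 ∈ S γ := ⟨hx0T.1, le_of_not_gt h⟩
        have : Metric.infDist x0 (S γ) = 0 := Metric.infDist_zero_of_mem hx0S
        have := hx0T.2
        linarith
      refine ⟨g x0 - γ, by linarith, fun ε hε hε1 f hf => ?_⟩
      refine hclose f hf.1 fun hfT => ?_
      have h1 : g x0 ≤ g f := hmin hfT
      have h2 : g f ≤ γ + ε := hf.2
      linarith
    -- conclude
  have upper : ∀ δ : ℝ, 0 < δ → ∃ ε₀ > 0, ∀ ε : ℝ, 0 < ε → ε < ε₀ →
      chebRad (S (γ + ε)) ≤ chebRad (S γ) + δ := by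
    intro δ hδ
    obtain ⟨ε₀, hε₀, hclose⟩ := key δ hδ
    refine ⟨ε₀, hε₀, fun ε hε hεlt => ?_⟩
    have hSεne : (S (γ + ε)).Nonempty := hS0ne.mono (hSmono (by linarith))
    refine le_of_forall_pos_le_add fun η hη => ?_
    have hlt : chebRad (S γ) < chebRad (S γ) + η := by linarith
    obtain ⟨z, hz⟩ := exists_lt_of_ciInf_lt hlt
    calc chebRad (S (γ + ε)) ≤ ⨆ f : S (γ + ε), ‖(f : X) - z‖ :=
          ciInf_le (hbddBelow _ (hSsub _) hSεne) z
      _ ≤ (⨆ f : S γ, ‖(f : X) - z‖) + δ := by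
          refine Real.iSup_le (fun f => ?_) ?_
          · obtain ⟨f', hf', hdist⟩ := hclose ε hε hεlt f f.2
            have h1 : ‖(f : X) - z‖ ≤ ‖(f : X) - f'‖ + ‖f' - z‖ := by
              have := norm_sub_le_norm_sub_add_norm_sub (f : X) f' z
              linarith [norm_sub_le ((f : X) - f') (f' - z)]
            have h2 : ‖(f : X) - f'‖ < δ := by rwa [← dist_eq_norm]
            have h3 : ‖f' - z‖ ≤ ⨆ f : S γ, ‖(f : X) - z‖ :=
              le_ciSup (hbdd _ (hSsub γ) z) ⟨f', hf'⟩
            linarith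
          · linarith [Fnonneg _ (hSsub γ) hS0ne z]
      _ ≤ chebRad (S γ) + η + δ := by linarith [hz.le]
      _ = chebRad (S γ) + δ + η := by ring
  -- finish with the metric characterization
  rw [Metric.tendsto_nhdsWithin_nhds]
  intro δ hδ
  obtain ⟨ε₀, hε₀, hup⟩ := upper (δ / 2) (by linarith)
  refine ⟨ε₀, hε₀, fun ε hε hdist => ?_⟩
  have hεpos : 0 < ε := hε
  have hεlt : ε < ε₀ := by
    rwa [Real.dist_eq, sub_zero, abs_of_pos hεpos] at hdist
  have h1 : chebRad (S γ) ≤ chebRad (S (γ + ε)) := chebmono (by linarith) hS0ne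
  have h2 : chebRad (S (γ + ε)) ≤ chebRad (S γ) + δ / 2 := hup ε hεpos hεlt
  rw [Real.dist_eq, abs_lt]
  constructor <;> [linarith; linarith]
end

section
/- Let K be a compact subset of X, w ∈ ℝ^m, ε > 0, and let g ∈ X satisfy ‖λ(g) − w‖ ≤ ε and dist(g, K)_X ≤ ε (i.e. there is h ∈ K with ‖g − h‖_X ≤ ε). Then for every f ∈ K_w, ‖f − g‖_X ≤ ε + 2 R(K(w, 2ε))_X. -/
open Bornology Metric

section ChebyshevRadius

variable {X : Type*} [NormedAddCommGroup X]

lemma norm_sub_le_two_mul_chebRad {S : Set X} (hS : IsBounded S) {x y : X} (hx : x ∈ S)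
    (hy : y ∈ S) : ‖x - y‖ ≤ 2 * chebRad S := by
  rw [← div_le_iff₀' two_pos]
  refine le_ciInf fun z => ?_
  obtain ⟨r, hr⟩ := (isBounded_iff_subset_closedBall z).1 hS
  have hbdd : BddAbove (Set.range fun p : S => ‖(p : X) - z‖) := by
    refine ⟨r, ?_⟩
    rintro _ ⟨p, rfl⟩
    exact mem_closedBall_iff_norm.1 (hr p.2)
  have hxz := le_ciSup hbdd ⟨x, hx⟩
  have hyz := le_ciSup hbdd ⟨y, hy⟩
  have hxy : ‖x - y‖ ≤ ‖x - z‖ + ‖y - z‖ := by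
    rw [norm_sub_rev y z]
    exact norm_sub_le_norm_sub_add_norm_sub x z y
  dsimp only at hxz hyz
  linarith

end ChebyshevRadius

section WeightedNorm

variable {m : ℕ}

lemma wNorm_nonneg (v : Fin m → ℝ) : 0 ≤ wNorm v := Real.sqrt_nonneg _

lemma wNorm_zero : wNorm (0 : Fin m → ℝ) = 0 := by simp [wNorm]

lemma wNorm_eq_norm_div_sqrt (v : Fin m → ℝ) :
    wNorm v = ‖(WithLp.toLp 2 v : EuclideanSpace ℝ (Fin m))‖ / Real.sqrt m := by
  rw [wNorm, EuclideanSpace.norm_eq, Real.sqrt_div' _ m.cast_nonneg]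
  simp only [Real.norm_eq_abs, sq_abs]

lemma wNorm_add_le (u v : Fin m → ℝ) : wNorm (u + v) ≤ wNorm u + wNorm v := by
  simp only [wNorm_eq_norm_div_sqrt, ← add_div, WithLp.toLp_add]
  gcongr
  exact norm_add_le _ _

lemma wNorm_le_of_forall_abs_le {v : Fin m → ℝ} {c : ℝ} (hc : 0 ≤ c) (hv : ∀ j, |v j| ≤ c) :
    wNorm v ≤ c := by
  have hsum : ∑ j, v j ^ 2 ≤ m * c ^ 2 := by
    calc ∑ j, v j ^ 2 ≤ ∑ _j : Fin m, c ^ 2 :=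
          Finset.sum_le_sum fun j _ => sq_le_sq' (abs_le.1 (hv j)).1 (abs_le.1 (hv j)).2
      _ = m * c ^ 2 := by simp
  calc wNorm v ≤ Real.sqrt (c ^ 2) :=
        Real.sqrt_le_sqrt (div_le_of_le_mul₀ m.cast_nonneg (sq_nonneg c) (by linarith))
    _ = c := Real.sqrt_sq hc

variable {X : Type*} [NormedAddCommGroup X] [NormedSpace ℝ X] {lam : Fin m → X →L[ℝ] ℝ}

lemma wNorm_apply_le_norm (hlam : ∀ j, ‖lam j‖ ≤ 1) (x : X) : wNorm (fun j => lam j x) ≤ ‖x‖ :=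
  wNorm_le_of_forall_abs_le (norm_nonneg x) fun j =>
    (lam j).le_of_opNorm_le (hlam j) x |>.trans_eq (one_mul _)

lemma wNorm_apply_sub_le (hlam : ∀ j, ‖lam j‖ ≤ 1) (w : Fin m → ℝ) (x y : X) :
    wNorm (fun j => lam j y - w j) ≤ ‖y - x‖ + wNorm (fun j => lam j x - w j) := by
  have hsplit : (fun j => lam j y - w j) = (fun j => lam j (y - x)) + fun j => lam j x - w j := by
    ext j
    simp
  rw [hsplit]
  exact (wNorm_add_le _ _).trans (add_le_add_left (wNorm_apply_le_norm hlam _) _)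

end WeightedNorm

theorem stmt_2_general
    {X : Type*} [NormedAddCommGroup X] [NormedSpace ℝ X]
    {m : ℕ}
    (lam : Fin m → X →L[ℝ] ℝ) (hlam : ∀ j, ‖lam j‖ ≤ 1)
    (K : Set X) (hK : IsCompact K) (w : Fin m → ℝ)
    (ε : ℝ) (g : X)
    (hg1 : wNorm (fun j => lam j g - w j) ≤ ε)
    (hg2 : ∃ h ∈ K, ‖g - h‖ ≤ ε) :
    ∀ f ∈ {f ∈ K | ∀ j, lam j f = w j},
      ‖f - g‖ ≤ ε + 2 * chebRad {f ∈ K | wNorm (fun j => lam j f - w j) ≤ 2 * ε} := by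
  rintro f ⟨hfK, hfw⟩
  obtain ⟨h, hhK, hgh⟩ := hg2
  set S := {f ∈ K | wNorm (fun j => lam j f - w j) ≤ 2 * ε}
  have hf : f ∈ S := by
    have hzero : (fun j => lam j f - w j) = 0 := funext fun j => sub_eq_zero.2 (hfw j)
    refine ⟨hfK, ?_⟩
    rw [hzero, wNorm_zero]
    linarith [wNorm_nonneg (fun j => lam j g - w j)]
  have hh : h ∈ S := by
    have hlamh := wNorm_apply_sub_le hlam w g h
    rw [norm_sub_rev] at hlamh
    exact ⟨hhK, by linarith⟩
  calc ‖f - g‖ ≤ ‖f - h‖ + ‖g - h‖ := by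
        simpa only [norm_sub_rev h g] using norm_sub_le_norm_sub_add_norm_sub f h g
    _ ≤ 2 * chebRad S + ε := by
        have hS : IsBounded S := hK.isBounded.subset (Set.sep_subset _ _)
        exact add_le_add (norm_sub_le_two_mul_chebRad hS hf hh) hgh
    _ = ε + 2 * chebRad S := add_comm _ _

/-- Let `K ⊆ X` be compact, `w ∈ ℝ^m`, `ε > 0`, and let `g ∈ X` satisfy
`‖λ(g) − w‖ ≤ ε` and `dist(g,K) ≤ ε` (there is `h ∈ K` with `‖g − h‖ ≤ ε`).
Then every `f ∈ K_w` satisfies `‖f − g‖ ≤ ε + 2 R(K(w,2ε))`. -/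
theorem stmt_2
    {X : Type*} [NormedAddCommGroup X] [NormedSpace ℝ X] [CompleteSpace X]
    {m : ℕ} (hm : 0 < m)
    (lam : Fin m → X →L[ℝ] ℝ) (hlam : ∀ j, ‖lam j‖ ≤ 1)
    (K : Set X) (hK : IsCompact K) (w : Fin m → ℝ)
    (ε : ℝ) (hε : 0 < ε) (g : X)
    (hg1 : wNorm (fun j => lam j g - w j) ≤ ε)
    (hg2 : ∃ h ∈ K, ‖g - h‖ ≤ ε) :
    ∀ f ∈ {f ∈ K | ∀ j, lam j f = w j},
      ‖f - g‖ ≤ ε + 2 * chebRad {f ∈ K | wNorm (fun j => lam j f - w j) ≤ 2 * ε} :=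
  stmt_2_general lam hlam K hK w ε g hg1 hg2
end

section
/- The piecewise-linear interpolant does not increase the L_p norm of the derivative: ‖S′‖_{L_p[0,1]} ≤ ‖f′‖_{L_p[0,1]}, where S′ is the a.e. derivative of S (the step function equal on (ξ_j, ξ_{j+1}) to the slope (f(ξ_{j+1}) − f(ξ_j))/(ξ_{j+1} − ξ_j)). -/
open MeasureTheory Set ENNReal
open scoped Function

/-! On each cell `I = (ξ_j, ξ_{j+1})` the slope of `S` is the mean value of `f'` over `I`, since
`f` is the integral of `f'`. By Hölder, `‖c‖ |I| ≤ ‖g‖_{L¹(I)} ≤ ‖g‖_{L^p(I)} |I|^{1 - 1/p}`, so a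
constant dominated by the mean of `‖g‖` has `L^p(I)` norm at most that of `g`. The cell-wise
inequalities then add up: for `p < ∞` the `p`-th powers of the norms are additive over the
disjoint cells, and for `p = ∞` the essential supremum over the union is the largest one. -/

theorem eLpNorm_const_le_of_enorm_mul_le_eLpNorm_one {α E : Type*} [MeasurableSpace α]
    [NormedAddCommGroup E] {μ : Measure α} [IsFiniteMeasure μ] (hμ : μ ≠ 0)
    {p : ℝ≥0∞} (hp : 1 ≤ p) {g : α → E} (hg : AEStronglyMeasurable g μ) {c : E}
    (hc : ‖c‖ₑ * μ univ ≤ eLpNorm g 1 μ) :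
    eLpNorm (fun _ => c) p μ ≤ eLpNorm g p μ := by
  have hm0 : μ univ ≠ 0 := Measure.measure_univ_ne_zero.2 hμ
  have hmtop : μ univ ≠ ∞ := measure_ne_top μ univ
  have holder := eLpNorm_le_eLpNorm_mul_rpow_measure_univ hp hg
  rw [toReal_one, div_one] at holder
  rw [eLpNorm_const c (zero_lt_one.trans_le hp).ne' hμ]
  calc ‖c‖ₑ * μ univ ^ (1 / p.toReal)
      = ‖c‖ₑ * μ univ * μ univ ^ (1 / p.toReal - 1) := by
        rw [mul_assoc]; nth_rw 2 [← rpow_one (μ univ)]; rw [← rpow_add _ _ hm0 hmtop]; ring_nf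
    _ ≤ eLpNorm g p μ * μ univ ^ (1 - 1 / p.toReal) * μ univ ^ (1 / p.toReal - 1) := by
        gcongr ?_ * _; exact hc.trans holder
    _ = eLpNorm g p μ := by
        rw [mul_assoc, ← rpow_add _ _ hm0 hmtop]; simp

theorem eLpNorm_restrict_iUnion_le_of_forall_le {α ι E F : Type*} [MeasurableSpace α]
    [ENorm E] [ENorm F] [Countable ι] {μ : Measure α} {p : ℝ≥0∞} (hp : p ≠ 0)
    {s : ι → Set α} (hs : ∀ i, MeasurableSet (s i)) (hdisj : Pairwise (Disjoint on s))
    {u : α → E} {v : α → F}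
    (h : ∀ i, eLpNorm u p (μ.restrict (s i)) ≤ eLpNorm v p (μ.restrict (s i))) :
    eLpNorm u p (μ.restrict (⋃ i, s i)) ≤ eLpNorm v p (μ.restrict (⋃ i, s i)) := by
  obtain rfl | hptop := eq_or_ne p ∞
  · simp only [eLpNorm_exponent_top] at h ⊢
    refine essSup_le_of_ae_le _ ((ae_restrict_iUnion_iff s _).2 fun i => ?_)
    have hvi : eLpNormEssSup v (μ.restrict (s i)) ≤ eLpNormEssSup v (μ.restrict (⋃ j, s j)) :=
      essSup_mono_measure (Measure.restrict_mono_set μ (subset_iUnion s i)).absolutelyContinuous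
    filter_upwards [ae_le_eLpNormEssSup (f := u) (μ := μ.restrict (s i))] with x hx
    exact hx.trans ((h i).trans hvi)
  · have hp_pos : 0 < p.toReal := toReal_pos hp hptop
    simp only [eLpNorm_eq_lintegral_rpow_enorm_toReal hp hptop] at h ⊢
    refine rpow_le_rpow ?_ (one_div_pos.2 hp_pos).le
    rw [lintegral_iUnion hs hdisj, lintegral_iUnion hs hdisj]
    exact ENNReal.tsum_le_tsum fun i => (rpow_le_rpow_iff (one_div_pos.2 hp_pos)).1 (h i)

theorem pairwise_disjoint_Ioc_castSucc_succ {α : Type*} [LinearOrder α] {n : ℕ}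
    {ξ : Fin (n + 1) → α} (hξ : Monotone ξ) :
    Pairwise (Disjoint on fun j : Fin n => Ioc (ξ j.castSucc) (ξ j.succ)) := fun i j hij => by
  simpa using hξ.pairwise_disjoint_on_Ioc_succ ((Fin.castSucc_injective n).ne hij)

theorem iUnion_Ioc_castSucc_succ {α : Type*} [LinearOrder α] {n : ℕ} {ξ : Fin (n + 1) → α}
    (hξ : Monotone ξ) :
    ⋃ j : Fin n, Ioc (ξ j.castSucc) (ξ j.succ) = Ioc (ξ 0) (ξ (Fin.last n)) := by
  refine Subset.antisymm
    (iUnion_subset fun j => Ioc_subset_Ioc (hξ (Fin.zero_le _)) (hξ (Fin.le_last _))) ?_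
  have hcover := Ioc_subset_biUnion_Ioc n (fun k => ξ (Fin.clamp k n))
  have h0 : Fin.clamp 0 n = 0 := by ext; simp [Fin.clamp]
  have hn : Fin.clamp n n = Fin.last n := by ext; simp [Fin.clamp]
  simp only [h0, hn] at hcover
  refine hcover.trans (iUnion₂_subset fun i hi => ?_)
  have hi : i < n := Finset.mem_range.1 hi
  have hl : Fin.clamp i n = (⟨i, hi⟩ : Fin n).castSucc := by ext; simp [Fin.clamp]; omega
  have hr : Fin.clamp (i + 1) n = (⟨i, hi⟩ : Fin n).succ := by ext; simp [Fin.clamp]; omega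
  rw [hl, hr]
  exact subset_iUnion (fun j : Fin n => Ioc (ξ j.castSucc) (ξ j.succ)) ⟨i, hi⟩

theorem enorm_mul_volume_Ioc_le_eLpNorm_one {E : Type*} [NormedAddCommGroup E]
    [NormedSpace ℝ E] {a b : ℝ} (hab : a ≤ b) {g : ℝ → E} {c : E}
    (hc : (b - a) • c = ∫ x in a..b, g x) :
    ‖c‖ₑ * volume (Ioc a b) ≤ eLpNorm g 1 (volume.restrict (Ioc a b)) := by
  rw [Real.volume_Ioc, eLpNorm_one_eq_lintegral_enorm]
  calc ‖c‖ₑ * ENNReal.ofReal (b - a) = ‖(b - a) • c‖ₑ := by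
        rw [enorm_smul, Real.enorm_of_nonneg (sub_nonneg.2 hab), mul_comm]
    _ = ‖∫ x in Ioc a b, g x‖ₑ := by rw [hc, intervalIntegral.integral_of_le hab]
    _ ≤ ∫⁻ x in Ioc a b, ‖g x‖ₑ := enorm_integral_le_lintegral_enorm g

theorem sub_eq_intervalIntegral_of_eq_add_integral {E : Type*} [NormedAddCommGroup E]
    [NormedSpace ℝ E] {f g : ℝ → E} {a b x y : ℝ} (hg : IntegrableOn g (Icc a b))
    (hf : ∀ x ∈ Icc a b, f x = f a + ∫ t in a..x, g t) (hx : x ∈ Icc a b) (hy : y ∈ Icc a b) :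
    f y - f x = ∫ t in x..y, g t := by
  have hint : ∀ z ∈ Icc a b, IntervalIntegrable g volume a z := fun z hz =>
    (hg.mono_set (uIcc_subset_Icc (left_mem_Icc.2 (hz.1.trans hz.2)) hz)).intervalIntegrable
  rw [hf y hy, hf x hx, add_sub_add_left_eq_sub,
    intervalIntegral.integral_interval_sub_left (hint y hy) (hint x hx)]

theorem eLpNorm_restrict_Ioc_le_of_eqOn_Ioo {E : Type*} [NormedAddCommGroup E]
    [NormedSpace ℝ E] {a b : ℝ} (hab : a < b) {p : ℝ≥0∞} (hp : 1 ≤ p) {g u : ℝ → E} {c : E}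
    (hg : AEStronglyMeasurable g (volume.restrict (Ioc a b)))
    (hu : EqOn u (fun _ => c) (Ioo a b))
    (hc : (b - a) • c = ∫ x in a..b, g x) :
    eLpNorm u p (volume.restrict (Ioc a b)) ≤ eLpNorm g p (volume.restrict (Ioc a b)) := by
  have hne : volume.restrict (Ioc a b) ≠ 0 := by
    simpa [Measure.restrict_eq_zero] using hab
  have hu_ae : u =ᵐ[volume.restrict (Ioc a b)] fun _ => c := by
    rw [← Measure.restrict_congr_set Ioo_ae_eq_Ioc]
    exact (ae_restrict_mem measurableSet_Ioo).mono hu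
  rw [eLpNorm_congr_ae hu_ae]
  refine eLpNorm_const_le_of_enorm_mul_le_eLpNorm_one hne hp hg ?_
  rw [Measure.restrict_apply_univ]
  exact enorm_mul_volume_Ioc_le_eLpNorm_one hab.le hc

theorem stmt_13_general
    (p : ℝ≥0∞) (hp : 1 ≤ p)
    {n : ℕ} (ξ : Fin (n + 1) → ℝ)
    (hmono : StrictMono ξ) (hξ0 : ξ 0 = 0) (hξ1 : ξ (Fin.last n) = 1)
    (f f' : ℝ → ℝ)
    (hf'int : IntegrableOn f' (Icc 0 1))
    (hAC : ∀ x ∈ Icc (0 : ℝ) 1, f x = f 0 + ∫ t in (0 : ℝ)..x, f' t)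
    (S' : ℝ → ℝ)
    (hS' : ∀ j : Fin n, ∀ x ∈ Ioo (ξ j.castSucc) (ξ j.succ),
      S' x = (f (ξ j.succ) - f (ξ j.castSucc)) / (ξ j.succ - ξ j.castSucc)) :
    eLpNorm S' p (volume.restrict (Icc 0 1)) ≤
      eLpNorm f' p (volume.restrict (Icc 0 1)) := by
  have hpieces : volume.restrict (Icc (0 : ℝ) 1) =
      volume.restrict (⋃ j : Fin n, Ioc (ξ j.castSucc) (ξ j.succ)) := by
    rw [iUnion_Ioc_castSucc_succ hmono.monotone, hξ0, hξ1]
    exact Measure.restrict_congr_set Ioc_ae_eq_Icc.symm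
  have hmem : ∀ i, ξ i ∈ Icc (0 : ℝ) 1 := fun i =>
    ⟨hξ0 ▸ hmono.monotone (Fin.zero_le i), hξ1 ▸ hmono.monotone (Fin.le_last i)⟩
  rw [hpieces]
  refine eLpNorm_restrict_iUnion_le_of_forall_le (zero_lt_one.trans_le hp).ne'
    (fun _ => measurableSet_Ioc) (pairwise_disjoint_Ioc_castSucc_succ hmono.monotone) fun j => ?_
  have hlt : ξ j.castSucc < ξ j.succ := hmono Fin.castSucc_lt_succ
  have hsub : Ioc (ξ j.castSucc) (ξ j.succ) ⊆ Icc 0 1 :=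
    Ioc_subset_Icc_self.trans (Icc_subset_Icc (hmem _).1 (hmem _).2)
  refine eLpNorm_restrict_Ioc_le_of_eqOn_Ioo hlt hp (hf'int.mono_set hsub).aestronglyMeasurable
    (hS' j) ?_
  rw [smul_eq_mul, mul_div_cancel₀ _ (sub_ne_zero.2 hlt.ne')]
  exact sub_eq_intervalIntegral_of_eq_add_integral hf'int hAC (hmem _) (hmem _)

/-- The piecewise-linear interpolant does not increase the `L_p` norm of the
derivative: if `f` is absolutely continuous on `[0,1]` with a.e. derivative `f'`,
`S` is the piecewise-linear interpolant of `f` at `0 = ξ_0 < ⋯ < ξ_n = 1`, and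
`S'` is the step function equal on `(ξ_j, ξ_{j+1})` to the slope
`(f(ξ_{j+1}) − f(ξ_j))/(ξ_{j+1} − ξ_j)`, then `‖S'‖_{L_p[0,1]} ≤ ‖f'‖_{L_p[0,1]}`. -/
theorem stmt_13
    (p : ℝ≥0∞) (hp : 1 ≤ p)
    {n : ℕ} (hn : 0 < n) (ξ : Fin (n + 1) → ℝ)
    (hmono : StrictMono ξ) (hξ0 : ξ 0 = 0) (hξ1 : ξ (Fin.last n) = 1)
    (f f' : ℝ → ℝ)
    (hf'int : IntegrableOn f' (Icc 0 1))
    (hAC : ∀ x ∈ Icc (0 : ℝ) 1, f x = f 0 + ∫ t in (0 : ℝ)..x, f' t)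
    (hf'Lp : MemLp f' p (volume.restrict (Icc 0 1)))
    (S S' : ℝ → ℝ)
    (hSaff : ∀ j : Fin n, ∀ x ∈ Icc (ξ j.castSucc) (ξ j.succ),
      S x = f (ξ j.castSucc) +
        (f (ξ j.succ) - f (ξ j.castSucc)) / (ξ j.succ - ξ j.castSucc) *
          (x - ξ j.castSucc))
    (hS' : ∀ j : Fin n, ∀ x ∈ Ioo (ξ j.castSucc) (ξ j.succ),
      S' x = (f (ξ j.succ) - f (ξ j.castSucc)) / (ξ j.succ - ξ j.castSucc)) :
    eLpNorm S' p (volume.restrict (Icc 0 1)) ≤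
      eLpNorm f' p (volume.restrict (Icc 0 1)) :=
  stmt_13_general p hp ξ hmono hξ0 hξ1 f f' hf'int hAC S' hS'
end

section
/- The piecewise-linear interpolant satisfies the uniform error bound ‖f − S‖_{L_∞[0,1]} ≤ h^{1 − 1/p} · ‖f′‖_{L_p[0,1]}, i.e. |f(x) − S(x)| ≤ h^{1−1/p}‖f′‖_{L_p[0,1]} for every x ∈ [0,1]. -/
/-!
On the cell `[a, b]` of the partition containing `x`, with `λ = (x - a) / (b - a)`,
`f x - S x = (1 - λ) (f x - f a) - λ (f b - f x)`, so `|f x - S x|` is at most the larger of two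
increments of `f` over subintervals of `[a, b]`. Each increment is an integral of `f'` over an interval of length
at most `h`, which Hölder's inequality bounds by `h ^ (1 - 1/p) ‖f'‖_p`.
-/

open MeasureTheory Set ENNReal

theorem Fin.exists_castSucc_le_le_succ {α : Type*} [LinearOrder α] {n : ℕ}
    (ξ : Fin (n + 1 + 1) → α) {x : α} (h₀ : ξ 0 ≤ x) (h₁ : x ≤ ξ (Fin.last (n + 1))) :
    ∃ j : Fin (n + 1), ξ j.castSucc ≤ x ∧ x ≤ ξ j.succ := by
  induction n with
  | zero => exact ⟨0, h₀, h₁⟩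
  | succ m ih =>
    by_cases hx : x ≤ ξ 1
    · exact ⟨0, h₀, hx⟩
    · obtain ⟨j, hj⟩ := ih (ξ ∘ Fin.succ) (le_of_not_ge hx) h₁
      exact ⟨j.succ, hj⟩

theorem ENNReal.one_sub_one_div_toReal_nonneg {p : ℝ≥0∞} (hp : 1 ≤ p) :
    0 ≤ 1 - 1 / p.toReal := by
  rcases eq_or_ne p ⊤ with rfl | hp_top
  · simp
  · have hp' : 1 ≤ p.toReal := by simpa using ENNReal.toReal_mono hp_top hp
    exact sub_nonneg.2 (div_le_one_of_le₀ hp' (zero_le_one.trans hp'))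

theorem abs_intervalIntegral_le_rpow_mul_eLpNorm {p : ℝ≥0∞} (hp : 1 ≤ p) {g : ℝ → ℝ}
    {s : Set ℝ} (hg : MemLp g p (volume.restrict s)) {u v : ℝ} (huv : u ≤ v)
    (hs : Ioc u v ⊆ s) :
    |∫ t in u..v, g t| ≤ (v - u) ^ (1 - 1 / p.toReal) * (eLpNorm g p (volume.restrict s)).toReal := by
  have hμ : volume.restrict (Ioc u v) ≤ volume.restrict s := Measure.restrict_mono hs le_rfl
  have hexp := ENNReal.one_sub_one_div_toReal_nonneg hp
  have holder : eLpNorm g 1 (volume.restrict (Ioc u v)) ≤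
      eLpNorm g p (volume.restrict s) * ENNReal.ofReal (v - u) ^ (1 - 1 / p.toReal) :=
    calc eLpNorm g 1 (volume.restrict (Ioc u v))
        ≤ eLpNorm g p (volume.restrict (Ioc u v)) *
            volume.restrict (Ioc u v) univ ^ (1 / (1 : ℝ≥0∞).toReal - 1 / p.toReal) :=
          eLpNorm_le_eLpNorm_mul_rpow_measure_univ hp (hg.aestronglyMeasurable.mono_measure hμ)
      _ = eLpNorm g p (volume.restrict (Ioc u v)) *
            ENNReal.ofReal (v - u) ^ (1 - 1 / p.toReal) := by
          simp [Real.volume_Ioc]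
      _ ≤ _ := by gcongr
  have hfin : eLpNorm g p (volume.restrict s) * ENNReal.ofReal (v - u) ^ (1 - 1 / p.toReal) ≠ ⊤ :=
    mul_ne_top hg.eLpNorm_ne_top (rpow_ne_top_of_nonneg hexp ofReal_ne_top)
  calc |∫ t in u..v, g t| = ‖∫ t in Ioc u v, g t‖ₑ.toReal := by
        rw [intervalIntegral.integral_of_le huv, toReal_enorm, Real.norm_eq_abs]
    _ ≤ (eLpNorm g 1 (volume.restrict (Ioc u v))).toReal := by
        refine toReal_mono (ne_top_of_le_ne_top hfin holder) ?_
        rw [eLpNorm_one_eq_lintegral_enorm]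
        exact enorm_integral_le_lintegral_enorm _
    _ ≤ _ := toReal_mono hfin holder
    _ = _ := by
        rw [toReal_mul, ← toReal_rpow, toReal_ofReal (sub_nonneg.2 huv), mul_comm]

theorem sub_eq_intervalIntegral_of_eq_add_integral_s15 {f f' : ℝ → ℝ} {a b : ℝ}
    (hf' : IntegrableOn f' (Icc a b)) (hf : ∀ x ∈ Icc a b, f x = f a + ∫ t in a..x, f' t)
    {u v : ℝ} (hu : u ∈ Icc a b) (hv : v ∈ Icc a b) :
    f v - f u = ∫ t in u..v, f' t := by
  have hint : ∀ x ∈ Icc a b, IntervalIntegrable f' volume a x := fun x hx =>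
    (hf'.mono_set (uIcc_subset_Icc (left_mem_Icc.2 (hx.1.trans hx.2)) hx)).intervalIntegrable
  rw [hf u hu, hf v hv, add_sub_add_left_eq_sub,
    intervalIntegral.integral_interval_sub_left (hint v hv) (hint u hu)]

theorem abs_sub_affine_interpolant_le {a b x y₀ y y₁ B : ℝ} (hab : a < b) (hx : x ∈ Icc a b)
    (h₀ : |y - y₀| ≤ B) (h₁ : |y₁ - y| ≤ B) :
    |y - (y₀ + (y₁ - y₀) / (b - a) * (x - a))| ≤ B := by
  set t := (x - a) / (b - a)
  have ht₀ : 0 ≤ t := div_nonneg (sub_nonneg.2 hx.1) (sub_nonneg.2 hab.le)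
  have ht₁ : t ≤ 1 := (div_le_one (sub_pos.2 hab)).2 (by linarith [hx.2])
  have hsplit : y - (y₀ + (y₁ - y₀) / (b - a) * (x - a)) = (1 - t) * (y - y₀) - t * (y₁ - y) := by
    simp only [t]; field_simp; ring
  calc |y - (y₀ + (y₁ - y₀) / (b - a) * (x - a))|
      ≤ (1 - t) * |y - y₀| + t * |y₁ - y| := by
        rw [hsplit]
        refine (abs_sub _ _).trans_eq ?_
        rw [abs_mul, abs_mul, abs_of_nonneg (sub_nonneg.2 ht₁), abs_of_nonneg ht₀]
    _ ≤ (1 - t) * B + t * B := by gcongr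
    _ = B := by ring

theorem stmt_15_general
    (p : ℝ≥0∞) (hp : 1 ≤ p)
    {n : ℕ} (ξ : Fin (n + 1) → ℝ)
    (hmono : StrictMono ξ) (hξ0 : ξ 0 = 0) (hξ1 : ξ (Fin.last n) = 1)
    (h : ℝ)
    (hmax : IsGreatest (Set.range fun j : Fin n => ξ j.succ - ξ j.castSucc) h)
    (f f' : ℝ → ℝ)
    (hAC : ∀ x ∈ Icc (0 : ℝ) 1, f x = f 0 + ∫ t in (0 : ℝ)..x, f' t)
    (hf'Lp : MemLp f' p (volume.restrict (Icc 0 1)))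
    (S : ℝ → ℝ)
    (hSaff : ∀ j : Fin n, ∀ x ∈ Icc (ξ j.castSucc) (ξ j.succ),
      S x = f (ξ j.castSucc) +
        (f (ξ j.succ) - f (ξ j.castSucc)) / (ξ j.succ - ξ j.castSucc) *
          (x - ξ j.castSucc)) :
    ∀ x ∈ Icc (0 : ℝ) 1,
      |f x - S x| ≤ h ^ (1 - 1 / p.toReal) *
        (eLpNorm f' p (volume.restrict (Icc 0 1))).toReal := by
  intro x hx
  obtain _ | m := n
  · rw [Fin.last_zero, hξ0] at hξ1
    norm_num at hξ1
  obtain ⟨j, hjx, hxj⟩ := Fin.exists_castSucc_le_le_succ ξ (hξ0 ▸ hx.1) (hξ1 ▸ hx.2)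
  have ha₀ : 0 ≤ ξ j.castSucc := hξ0 ▸ hmono.monotone (Fin.zero_le _)
  have hb₁ : ξ j.succ ≤ 1 := hξ1 ▸ hmono.monotone (Fin.le_last _)
  have hcell : ∀ u v, ξ j.castSucc ≤ u → u ≤ v → v ≤ ξ j.succ →
      |f v - f u| ≤ h ^ (1 - 1 / p.toReal) * (eLpNorm f' p (volume.restrict (Icc 0 1))).toReal := by
    intro u v hu huv hv
    rw [sub_eq_intervalIntegral_of_eq_add_integral_s15 (hf'Lp.integrable hp) hAC
      ⟨ha₀.trans hu, huv.trans (hv.trans hb₁)⟩ ⟨(ha₀.trans hu).trans huv, hv.trans hb₁⟩]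
    refine (abs_intervalIntegral_le_rpow_mul_eLpNorm hp hf'Lp huv
      (Ioc_subset_Icc_self.trans (Icc_subset_Icc (ha₀.trans hu) (hv.trans hb₁)))).trans ?_
    have hexp := ENNReal.one_sub_one_div_toReal_nonneg hp
    gcongr
    linarith [hmax.2 ⟨j, rfl⟩]
  rw [hSaff j x ⟨hjx, hxj⟩]
  exact abs_sub_affine_interpolant_le (hmono Fin.castSucc_lt_succ) ⟨hjx, hxj⟩
    (hcell _ _ le_rfl hjx hxj) (hcell _ _ hjx hxj le_rfl)

/-- Uniform error bound for the piecewise-linear interpolant: if `f` is absolutely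
continuous on `[0,1]` with a.e. derivative `f' ∈ L_p[0,1]`, and `S` interpolates
`f` at `0 = ξ_0 < ⋯ < ξ_n = 1` and is affine on each `[ξ_j, ξ_{j+1}]`, then
`|f(x) − S(x)| ≤ h^{1−1/p} ‖f'‖_{L_p[0,1]}` for every `x ∈ [0,1]`, where `h` is
the maximal spacing. -/
theorem stmt_15
    (p : ℝ≥0∞) (hp : 1 ≤ p)
    {n : ℕ} (hn : 0 < n) (ξ : Fin (n + 1) → ℝ)
    (hmono : StrictMono ξ) (hξ0 : ξ 0 = 0) (hξ1 : ξ (Fin.last n) = 1)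
    (h : ℝ)
    (hmax : IsGreatest (Set.range fun j : Fin n => ξ j.succ - ξ j.castSucc) h)
    (f f' : ℝ → ℝ)
    (hf'int : IntegrableOn f' (Icc 0 1))
    (hAC : ∀ x ∈ Icc (0 : ℝ) 1, f x = f 0 + ∫ t in (0 : ℝ)..x, f' t)
    (hf'Lp : MemLp f' p (volume.restrict (Icc 0 1)))
    (S : ℝ → ℝ)
    (hSaff : ∀ j : Fin n, ∀ x ∈ Icc (ξ j.castSucc) (ξ j.succ),
      S x = f (ξ j.castSucc) +
        (f (ξ j.succ) - f (ξ j.castSucc)) / (ξ j.succ - ξ j.castSucc) *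
          (x - ξ j.castSucc)) :
    ∀ x ∈ Icc (0 : ℝ) 1,
      |f x - S x| ≤ h ^ (1 - 1 / p.toReal) *
        (eLpNorm f' p (volume.restrict (Icc 0 1))).toReal :=
  stmt_15_general p hp ξ hmono hξ0 hξ1 h hmax f f' hAC hf'Lp S hSaff
end

section
/- Suppose K_w is nonempty and R(K_w) > 0. Then the piecewise-linear interpolant of the data satisfies the strict inequality ‖S_w′‖_{L_p[0,1]} < 1, where S_w′ is the a.e. derivative of S_w; in particular Λ := 1 − ‖S_w′‖_{L_p[0,1]} > 0. -/
/-!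
On each cell `[x_j, x_{j+1}]`, Jensen's inequality for the strictly convex function `|·|^p`
bounds `∫ |f'|^p` over the cell from below by `|slope|^p · (x_{j+1} - x_j)`, with equality only
if `f'` is a.e. equal to the slope there. Summing over the cells gives
`‖S_w'‖_p^p ≤ ‖f'‖_p^p ≤ 1` for every `f ∈ K_w`. If `‖S_w'‖_p = 1`, every `f ∈ K_w` would have
`f' = S_w'` a.e., hence `f = S_w` on `[0,1]`; then `K_w` is a single point of `L₂[0,1]` and
`R(K_w) = 0`.
-/

open MeasureTheory Set ENNReal

/-- The model class: absolutely continuous `f : [0,1] → ℝ` with `‖f'‖_{L_p[0,1]} ≤ 1`. -/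
def modelK (p : ℝ) : Set (ℝ → ℝ) :=
  {f | ∃ f' : ℝ → ℝ, IntegrableOn f' (Icc 0 1) ∧
    (∀ t ∈ Icc (0 : ℝ) 1, f t = f 0 + ∫ u in (0 : ℝ)..t, f' u) ∧
    eLpNorm f' (ENNReal.ofReal p) (volume.restrict (Icc 0 1)) ≤ 1}

/-- Chebyshev radius in `L₂[0,1]`: `R(S) = inf_z sup_{f ∈ S} ‖f − z‖_{L₂[0,1]}`. -/
noncomputable def L2cheb (S : Set (ℝ → ℝ)) : ℝ≥0∞ :=
  ⨅ z : ℝ → ℝ, ⨆ f ∈ S, eLpNorm (fun t => f t - z t) 2 (volume.restrict (Icc 0 1))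

theorem ENNReal.le_of_sum_le_sum {ι : Type*} {s : Finset ι} {a b : ι → ℝ≥0∞}
    (hab : ∀ i ∈ s, a i ≤ b i) (hsum : ∑ i ∈ s, b i ≤ ∑ i ∈ s, a i) (hfin : ∑ i ∈ s, a i ≠ ∞)
    {i : ι} (hi : i ∈ s) : b i ≤ a i := by
  classical
  rw [← Finset.add_sum_erase s _ hi, ← Finset.add_sum_erase s _ hi] at hsum
  rw [← Finset.add_sum_erase s _ hi] at hfin
  have hrest : ∑ j ∈ s.erase i, a j ≤ ∑ j ∈ s.erase i, b j :=
    Finset.sum_le_sum fun j hj => hab j (Finset.mem_of_mem_erase hj)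
  exact (ENNReal.add_le_add_iff_right (ENNReal.add_ne_top.1 hfin).2).1
    ((add_le_add_right hrest _).trans hsum)

theorem continuous_abs_rpow {p : ℝ} (hp : 0 ≤ p) : Continuous fun t : ℝ => |t| ^ p :=
  continuous_abs.rpow_const fun _ => Or.inr hp

theorem convexOn_abs_rpow {p : ℝ} (hp : 1 ≤ p) : ConvexOn ℝ univ fun t : ℝ => |t| ^ p := by
  refine ⟨convex_univ, fun x _ y _ a b ha hb hab => ?_⟩
  have hnorm := convexOn_univ_norm.2 (mem_univ x) (mem_univ y) ha hb hab
  simp only [smul_eq_mul, Real.norm_eq_abs] at hnorm ⊢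
  calc |a * x + b * y| ^ p ≤ (a * |x| + b * |y|) ^ p := by gcongr
    _ ≤ a * |x| ^ p + b * |y| ^ p := by
      simpa using (convexOn_rpow hp).2 (abs_nonneg x) (abs_nonneg y) ha hb hab

theorem strictConvexOn_abs_rpow {p : ℝ} (hp : 1 < p) :
    StrictConvexOn ℝ univ fun t : ℝ => |t| ^ p := by
  refine ⟨convex_univ, fun x _ y _ hxy a b ha hb hab => ?_⟩
  simp only [smul_eq_mul]
  by_cases habs : |x| = |y|
  · -- then `x = -y ≠ 0`, and `a * x + b * y = (b - a) * y` is strictly shorter than `y`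
    have hyx : x = -y := (abs_eq_abs.1 habs).resolve_left hxy
    have hy : 0 < |y| := abs_pos.2 fun hy => hxy (by simp [hyx, hy])
    have hshort : |a * x + b * y| < |y| := by
      rw [hyx, show a * -y + b * y = (b - a) * y by ring, abs_mul]
      exact mul_lt_of_lt_one_left hy (abs_lt.2 ⟨by linarith, by linarith⟩)
    calc |a * x + b * y| ^ p < |y| ^ p := by gcongr
      _ = a * |x| ^ p + b * |y| ^ p := by rw [habs, ← add_mul, hab, one_mul]
  · have hnorm := convexOn_univ_norm.2 (mem_univ x) (mem_univ y) ha.le hb.le hab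
    simp only [smul_eq_mul, Real.norm_eq_abs] at hnorm
    calc |a * x + b * y| ^ p ≤ (a * |x| + b * |y|) ^ p := by gcongr
      _ < a * |x| ^ p + b * |y| ^ p := by
        simpa using (strictConvexOn_rpow hp).2 (abs_nonneg x) (abs_nonneg y) habs ha hb hab

section LpEnergy

variable {α : Type*} [MeasurableSpace α] {μ : Measure α} {p : ℝ} {g : α → ℝ}

theorem ofReal_abs_rpow (hp : 0 ≤ p) (r : ℝ) : ENNReal.ofReal (|r| ^ p) = ‖r‖ₑ ^ p := by
  rw [Real.enorm_eq_ofReal_abs, ofReal_rpow_of_nonneg (abs_nonneg r) hp]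

theorem integrable_abs_rpow_of_lintegral_ne_top (hp : 0 ≤ p) (hg : AEStronglyMeasurable g μ)
    (h : ∫⁻ t, ‖g t‖ₑ ^ p ∂μ ≠ ∞) : Integrable (fun t => |g t| ^ p) μ := by
  refine ⟨(hg.aemeasurable.abs.pow_const p).aestronglyMeasurable, ?_⟩
  rw [hasFiniteIntegral_iff_ofReal (ae_of_all _ fun t => by positivity)]
  simpa only [ofReal_abs_rpow hp] using h.lt_top

theorem lintegral_enorm_rpow_eq_ofReal_integral (hp : 0 ≤ p)
    (hint : Integrable (fun t => |g t| ^ p) μ) :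
    ∫⁻ t, ‖g t‖ₑ ^ p ∂μ = ENNReal.ofReal (∫ t, |g t| ^ p ∂μ) := by
  rw [ofReal_integral_eq_lintegral_ofReal hint (ae_of_all _ fun t => by positivity)]
  simp only [ofReal_abs_rpow hp]

theorem lintegral_enorm_rpow_le_one_of_eLpNorm_le_one (hp : 0 < p)
    (h : eLpNorm g (ENNReal.ofReal p) μ ≤ 1) : ∫⁻ t, ‖g t‖ₑ ^ p ∂μ ≤ 1 := by
  rw [eLpNorm_eq_lintegral_rpow_enorm_toReal (by simpa using hp) ofReal_ne_top,
    toReal_ofReal hp.le, one_div, ENNReal.rpow_inv_le_iff hp, ENNReal.one_rpow] at h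
  exact h

theorem eLpNorm_lt_one_of_lintegral_enorm_rpow_lt_one (hp : 0 < p)
    (h : ∫⁻ t, ‖g t‖ₑ ^ p ∂μ < 1) : eLpNorm g (ENNReal.ofReal p) μ < 1 := by
  rw [eLpNorm_eq_lintegral_rpow_enorm_toReal (by simpa using hp) ofReal_ne_top,
    toReal_ofReal hp.le]
  exact ENNReal.rpow_lt_one h (by positivity)

variable [IsFiniteMeasure μ]

theorem enorm_rpow_mul_measure_univ (r : ℝ) (hp : 0 ≤ p) :
    ‖r‖ₑ ^ p * μ univ = ENNReal.ofReal (|r| ^ p * μ.real univ) := by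
  rw [ofReal_mul (by positivity), ofReal_abs_rpow hp, ofReal_measureReal (measure_ne_top μ univ)]

variable [NeZero μ]

theorem lintegral_enorm_rpow_eq_ofReal_average_mul (hp : 0 ≤ p)
    (hint : Integrable (fun t => |g t| ^ p) μ) :
    ∫⁻ t, ‖g t‖ₑ ^ p ∂μ = ENNReal.ofReal ((⨍ t, |g t| ^ p ∂μ) * μ.real univ) := by
  rw [lintegral_enorm_rpow_eq_ofReal_integral hp hint, average_eq, smul_eq_mul, mul_comm,
    mul_inv_cancel_left₀ measureReal_univ_pos.ne']

theorem enorm_average_rpow_mul_le_lintegral (hp : 1 ≤ p) (hg : Integrable g μ) :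
    ‖⨍ t, g t ∂μ‖ₑ ^ p * μ univ ≤ ∫⁻ t, ‖g t‖ₑ ^ p ∂μ := by
  by_cases hfin : ∫⁻ t, ‖g t‖ₑ ^ p ∂μ = ∞
  · simp [hfin]
  have hint := integrable_abs_rpow_of_lintegral_ne_top (by linarith) hg.1 hfin
  have hjensen := (convexOn_abs_rpow hp).map_average_le
    (continuous_abs_rpow (by linarith)).continuousOn isClosed_univ
    (ae_of_all _ fun _ => mem_univ _) hg hint
  rw [enorm_rpow_mul_measure_univ _ (by linarith),
    lintegral_enorm_rpow_eq_ofReal_average_mul (by linarith) hint]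
  exact ofReal_le_ofReal (mul_le_mul_of_nonneg_right hjensen measureReal_nonneg)

theorem ae_eq_average_of_lintegral_enorm_rpow_le (hp : 1 < p) (hg : Integrable g μ)
    (h : ∫⁻ t, ‖g t‖ₑ ^ p ∂μ ≤ ‖⨍ t, g t ∂μ‖ₑ ^ p * μ univ) :
    g =ᵐ[μ] fun _ => ⨍ t, g t ∂μ := by
  rw [enorm_rpow_mul_measure_univ _ (by linarith)] at h
  have hint := integrable_abs_rpow_of_lintegral_ne_top (by linarith) hg.1
    (ne_top_of_le_ne_top ofReal_ne_top h)
  rw [lintegral_enorm_rpow_eq_ofReal_average_mul (by linarith) hint] at h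
  refine ((strictConvexOn_abs_rpow hp).ae_eq_const_or_map_average_lt
    (continuous_abs_rpow (by linarith)).continuousOn isClosed_univ
    (ae_of_all _ fun _ => mem_univ _) hg hint).resolve_right fun hlt => h.not_gt ?_
  exact (ofReal_lt_ofReal_iff_of_nonneg (by positivity)).2
    (mul_lt_mul_of_pos_right hlt measureReal_univ_pos)

end LpEnergy

section Partition

open Function

variable {α : Type*} [LinearOrder α] {n : ℕ} {x : Fin (n + 1) → α}

theorem Monotone.pairwise_disjoint_on_Ioc_fin (hx : Monotone x) :
    Pairwise (Disjoint on fun j : Fin n => Ioc (x j.castSucc) (x j.succ)) := by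
  intro i j hij
  rcases hij.lt_or_gt with h | h
  · exact Ioc_disjoint_Ioc_of_le (hx (Fin.succ_le_castSucc_iff.2 h))
  · exact (Ioc_disjoint_Ioc_of_le (hx (Fin.succ_le_castSucc_iff.2 h))).symm

theorem Monotone.iUnion_Ioc_fin (hx : Monotone x) :
    ⋃ j : Fin n, Ioc (x j.castSucc) (x j.succ) = Ioc (x 0) (x (Fin.last n)) := by
  classical
  refine Subset.antisymm (iUnion_subset fun j => Ioc_subset_Ioc (hx (Fin.zero_le _))
    (hx (Fin.le_last _))) fun t ht => ?_
  -- the cell of `t` ends at the first node `k` with `t ≤ x k`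
  set S := Finset.univ.filter fun i => t ≤ x i
  have hS : S.Nonempty := ⟨Fin.last n, by simpa [S] using ht.2⟩
  have hk : t ≤ x (S.min' hS) := (Finset.mem_filter.1 (S.min'_mem hS)).2
  obtain ⟨j, hj⟩ := Fin.exists_succ_eq.2 fun h => ht.1.not_ge (h ▸ hk)
  refine mem_iUnion.2 ⟨j, lt_of_not_ge fun hjt => ?_, hj ▸ hk⟩
  exact (Fin.castSucc_lt_succ (i := j)).not_ge
    (hj ▸ S.min'_le _ (Finset.mem_filter.2 ⟨Finset.mem_univ _, hjt⟩))

theorem Monotone.mem_Icc_fin (hx : Monotone x) (j : Fin (n + 1)) :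
    x j ∈ Icc (x 0) (x (Fin.last n)) :=
  ⟨hx (Fin.zero_le j), hx (Fin.le_last j)⟩

theorem Monotone.setLIntegral_Icc_eq_sum_fin [TopologicalSpace α] [OrderClosedTopology α]
    [MeasurableSpace α] [OpensMeasurableSpace α] (hx : Monotone x) (μ : Measure α)
    [NullSingletonClass μ] (F : α → ℝ≥0∞) :
    ∫⁻ t in Icc (x 0) (x (Fin.last n)), F t ∂μ =
      ∑ j : Fin n, ∫⁻ t in Ioc (x j.castSucc) (x j.succ), F t ∂μ := by
  rw [← setLIntegral_congr Ioc_ae_eq_Icc, ← hx.iUnion_Ioc_fin,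
    lintegral_iUnion (fun _ => measurableSet_Ioc) hx.pairwise_disjoint_on_Ioc_fin, tsum_fintype]

end Partition

theorem L2cheb_eq_zero_of_eqOn {S : Set (ℝ → ℝ)} {f₀ : ℝ → ℝ}
    (h : ∀ f ∈ S, EqOn f f₀ (Icc 0 1)) : L2cheb S = 0 := by
  refine nonpos_iff_eq_zero.1 ((iInf_le _ f₀).trans (iSup₂_le fun f hf => ?_))
  rw [eLpNorm_congr_ae (g := 0) ?_, eLpNorm_zero]
  filter_upwards [ae_restrict_mem measurableSet_Icc] with t ht
  simp [h f hf ht]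

section IntegralRepresentation

variable {f f₀ g g₀ : ℝ → ℝ} {a b : ℝ}

theorem eqOn_Icc_of_ae_eq_integrand (hf : ∀ t ∈ Icc a b, f t = f a + ∫ u in a..t, g u)
    (hf₀ : ∀ t ∈ Icc a b, f₀ t = f₀ a + ∫ u in a..t, g₀ u) (ha : f a = f₀ a)
    (hg : g =ᵐ[volume.restrict (Ioc a b)] g₀) : EqOn f f₀ (Icc a b) := by
  intro t ht
  rw [hf t ht, hf₀ t ht, ha, intervalIntegral.integral_of_le ht.1,
    intervalIntegral.integral_of_le ht.1,
    integral_congr_ae (ae_restrict_of_ae_restrict_of_subset (Ioc_subset_Ioc_right ht.2) hg)]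

theorem setAverage_Ioc_eq_div (hg : IntegrableOn g (Icc a b))
    (hf : ∀ t ∈ Icc a b, f t = f a + ∫ u in a..t, g u) {s t : ℝ} (hs : s ∈ Icc a b)
    (ht : t ∈ Icc a b) (hst : s ≤ t) :
    ⨍ u in Ioc s t, g u = (f t - f s) / (t - s) := by
  have hint : ∀ r ∈ Icc a b, IntervalIntegrable g volume a r := fun r hr =>
    (hg.mono_set (by rw [uIcc_of_le hr.1]; exact Icc_subset_Icc_right hr.2)).intervalIntegrable
  rw [setAverage_eq, Real.volume_real_Ioc_of_le hst, ← intervalIntegral.integral_of_le hst,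
    ← intervalIntegral.integral_interval_sub_left (hint t ht) (hint s hs), hf t ht, hf s hs,
    smul_eq_mul, div_eq_inv_mul]
  ring

variable {p : ℝ}

theorem enorm_div_rpow_mul_le_setLIntegral (hp : 1 ≤ p) (hg : IntegrableOn g (Icc a b))
    (hf : ∀ t ∈ Icc a b, f t = f a + ∫ u in a..t, g u) {s t : ℝ} (hs : s ∈ Icc a b)
    (ht : t ∈ Icc a b) (hst : s < t) :
    ‖(f t - f s) / (t - s)‖ₑ ^ p * volume (Ioc s t) ≤ ∫⁻ u in Ioc s t, ‖g u‖ₑ ^ p := by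
  have : NeZero (volume.restrict (Ioc s t)) := ⟨by simp [hst]⟩
  have := enorm_average_rpow_mul_le_lintegral hp
    (hg.mono_set (Ioc_subset_Icc_self.trans (Icc_subset_Icc hs.1 ht.2)))
  rwa [setAverage_Ioc_eq_div hg hf hs ht hst.le, Measure.restrict_apply_univ] at this

theorem ae_eq_div_of_setLIntegral_le (hp : 1 < p) (hg : IntegrableOn g (Icc a b))
    (hf : ∀ t ∈ Icc a b, f t = f a + ∫ u in a..t, g u) {s t : ℝ} (hs : s ∈ Icc a b)
    (ht : t ∈ Icc a b) (hst : s < t)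
    (h : ∫⁻ u in Ioc s t, ‖g u‖ₑ ^ p ≤ ‖(f t - f s) / (t - s)‖ₑ ^ p * volume (Ioc s t)) :
    g =ᵐ[volume.restrict (Ioc s t)] fun _ => (f t - f s) / (t - s) := by
  have : NeZero (volume.restrict (Ioc s t)) := ⟨by simp [hst]⟩
  rw [← setAverage_Ioc_eq_div hg hf hs ht hst.le] at h ⊢
  exact ae_eq_average_of_lintegral_enorm_rpow_le hp
    (hg.mono_set (Ioc_subset_Icc_self.trans (Icc_subset_Icc hs.1 ht.2)))
    (by rwa [Measure.restrict_apply_univ])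

end IntegralRepresentation

section Interpolant

variable {n : ℕ} {x : Fin (n + 1) → ℝ} {p : ℝ}

/-- `‖S_w'‖_p ^ p` for the piecewise-linear interpolant `S_w` of the data `w` at the nodes `x`. -/
noncomputable def interpolantEnergy (p : ℝ) (x w : Fin (n + 1) → ℝ) : ℝ≥0∞ :=
  ∑ j : Fin n, ‖(w j.succ - w j.castSucc) / (x j.succ - x j.castSucc)‖ₑ ^ p *
    volume (Ioc (x j.castSucc) (x j.succ))

theorem interpolantEnergy_ne_top (hp : 0 ≤ p) (w : Fin (n + 1) → ℝ) :
    interpolantEnergy p x w ≠ ∞ :=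
  ENNReal.sum_ne_top.2 fun _ _ =>
    mul_ne_top (rpow_ne_top_of_nonneg hp enorm_ne_top) measure_Ioc_lt_top.ne

theorem setLIntegral_Icc_eq_interpolantEnergy (hx : Monotone x) {w : Fin (n + 1) → ℝ}
    {F : ℝ → ℝ} (hF : ∀ j : Fin n, ∀ t ∈ Ioo (x j.castSucc) (x j.succ),
      F t = (w j.succ - w j.castSucc) / (x j.succ - x j.castSucc)) :
    ∫⁻ t in Icc (x 0) (x (Fin.last n)), ‖F t‖ₑ ^ p = interpolantEnergy p x w := by
  rw [hx.setLIntegral_Icc_eq_sum_fin]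
  refine Finset.sum_congr rfl fun j _ => ?_
  rw [← setLIntegral_congr Ioo_ae_eq_Ioc, setLIntegral_congr_fun measurableSet_Ioo
    fun t ht => by rw [hF j t ht], setLIntegral_const, measure_congr Ioo_ae_eq_Ioc]

variable {f g : ℝ → ℝ}

theorem interpolantEnergy_le_setLIntegral (hp : 1 ≤ p) (hx : StrictMono x)
    (hg : IntegrableOn g (Icc (x 0) (x (Fin.last n))))
    (hf : ∀ t ∈ Icc (x 0) (x (Fin.last n)), f t = f (x 0) + ∫ u in x 0..t, g u) :
    interpolantEnergy p x (f ∘ x) ≤ ∫⁻ t in Icc (x 0) (x (Fin.last n)), ‖g t‖ₑ ^ p := by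
  rw [hx.monotone.setLIntegral_Icc_eq_sum_fin]
  exact Finset.sum_le_sum fun j _ => enorm_div_rpow_mul_le_setLIntegral hp hg hf
    (hx.monotone.mem_Icc_fin j.castSucc) (hx.monotone.mem_Icc_fin j.succ) (hx Fin.castSucc_lt_succ)

theorem ae_eq_div_of_setLIntegral_le_interpolantEnergy (hp : 1 < p) (hx : StrictMono x)
    (hg : IntegrableOn g (Icc (x 0) (x (Fin.last n))))
    (hf : ∀ t ∈ Icc (x 0) (x (Fin.last n)), f t = f (x 0) + ∫ u in x 0..t, g u)
    (h : ∫⁻ t in Icc (x 0) (x (Fin.last n)), ‖g t‖ₑ ^ p ≤ interpolantEnergy p x (f ∘ x))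
    (j : Fin n) :
    g =ᵐ[volume.restrict (Ioc (x j.castSucc) (x j.succ))]
      fun _ => (f (x j.succ) - f (x j.castSucc)) / (x j.succ - x j.castSucc) := by
  have hcell : ∀ j : Fin n, x j.castSucc ∈ Icc (x 0) (x (Fin.last n)) ∧
      x j.succ ∈ Icc (x 0) (x (Fin.last n)) ∧ x j.castSucc < x j.succ := fun j =>
    ⟨hx.monotone.mem_Icc_fin _, hx.monotone.mem_Icc_fin _, hx Fin.castSucc_lt_succ⟩
  have hfin := interpolantEnergy_ne_top (x := x) (by linarith) (f ∘ x)
  rw [hx.monotone.setLIntegral_Icc_eq_sum_fin] at h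
  rw [interpolantEnergy] at h hfin
  -- the cellwise Jensen inequalities add up to an equality, so none of them is strict
  have hle := ENNReal.le_of_sum_le_sum
    (fun j _ => enorm_div_rpow_mul_le_setLIntegral hp.le hg hf (hcell j).1 (hcell j).2.1
      (hcell j).2.2) h hfin (Finset.mem_univ j)
  exact ae_eq_div_of_setLIntegral_le hp hg hf (hcell j).1 (hcell j).2.1 (hcell j).2.2 hle

theorem eqOn_of_setLIntegral_le_interpolantEnergy (hp : 1 < p) (hx : StrictMono x)
    {f₀ g₀ : ℝ → ℝ} (hg : IntegrableOn g (Icc (x 0) (x (Fin.last n))))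
    (hf : ∀ t ∈ Icc (x 0) (x (Fin.last n)), f t = f (x 0) + ∫ u in x 0..t, g u)
    (hg₀ : IntegrableOn g₀ (Icc (x 0) (x (Fin.last n))))
    (hf₀ : ∀ t ∈ Icc (x 0) (x (Fin.last n)), f₀ t = f₀ (x 0) + ∫ u in x 0..t, g₀ u)
    (hnodes : f ∘ x = f₀ ∘ x)
    (h : ∫⁻ t in Icc (x 0) (x (Fin.last n)), ‖g t‖ₑ ^ p ≤ interpolantEnergy p x (f ∘ x))
    (h₀ : ∫⁻ t in Icc (x 0) (x (Fin.last n)), ‖g₀ t‖ₑ ^ p ≤ interpolantEnergy p x (f ∘ x)) :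
    EqOn f f₀ (Icc (x 0) (x (Fin.last n))) := by
  refine eqOn_Icc_of_ae_eq_integrand hf hf₀ (congrFun hnodes 0) ?_
  rw [Filter.EventuallyEq, ← hx.monotone.iUnion_Ioc_fin, ae_restrict_iUnion_iff]
  intro j
  filter_upwards [ae_eq_div_of_setLIntegral_le_interpolantEnergy hp hx hg hf h j,
    ae_eq_div_of_setLIntegral_le_interpolantEnergy hp hx hg₀ hf₀ (hnodes ▸ h₀) j] with t ht ht₀
  rw [ht, ht₀, show f (x j.succ) = f₀ (x j.succ) from congrFun hnodes _,
    show f (x j.castSucc) = f₀ (x j.castSucc) from congrFun hnodes _]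

end Interpolant

theorem stmt_16_general
    (p : ℝ) (hp1 : 1 < p)
    {n : ℕ} (x : Fin (n + 1) → ℝ)
    (hmono : StrictMono x) (hx0 : x 0 = 0) (hx1 : x (Fin.last n) = 1)
    (w : Fin (n + 1) → ℝ)
    (hne : ({f ∈ modelK p | ∀ j, f (x j) = w j}).Nonempty)
    (hR : 0 < L2cheb {f ∈ modelK p | ∀ j, f (x j) = w j})
    (Sw' : ℝ → ℝ)
    (hSw' : ∀ j : Fin n, ∀ t ∈ Ioo (x j.castSucc) (x j.succ),
      Sw' t = (w j.succ - w j.castSucc) / (x j.succ - x j.castSucc)) :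
    eLpNorm Sw' (ENNReal.ofReal p) (volume.restrict (Icc 0 1)) < 1 ∧
    0 < 1 - (eLpNorm Sw' (ENNReal.ofReal p) (volume.restrict (Icc 0 1))).toReal := by
  have hp0 : 0 < p := by linarith
  have hmem : ∀ f ∈ {f ∈ modelK p | ∀ j, f (x j) = w j}, f ∘ x = w ∧ ∃ g,
      IntegrableOn g (Icc (x 0) (x (Fin.last n))) ∧
      (∀ t ∈ Icc (x 0) (x (Fin.last n)), f t = f (x 0) + ∫ u in x 0..t, g u) ∧
      ∫⁻ t in Icc (x 0) (x (Fin.last n)), ‖g t‖ₑ ^ p ≤ 1 := by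
    rintro f ⟨⟨g, hg, hf, hnorm⟩, hw⟩
    rw [hx0, hx1]
    exact ⟨funext hw, g, hg, hf, lintegral_enorm_rpow_le_one_of_eLpNorm_le_one hp0 hnorm⟩
  obtain ⟨f₀, hf₀⟩ := hne
  obtain ⟨hw₀, g₀, hg₀, hrep₀, hle₀⟩ := hmem f₀ hf₀
  have hE_le : interpolantEnergy p x w ≤ 1 :=
    hw₀ ▸ (interpolantEnergy_le_setLIntegral hp1.le hmono hg₀ hrep₀).trans hle₀
  have hE_lt : interpolantEnergy p x w < 1 := by
    refine hE_le.lt_of_ne fun hE => hR.ne' (L2cheb_eq_zero_of_eqOn (f₀ := f₀) fun f hf => ?_)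
    obtain ⟨hw, g, hg, hrep, hle⟩ := hmem f hf
    rw [← hx0, ← hx1]
    exact eqOn_of_setLIntegral_le_interpolantEnergy hp1 hmono hg hrep hg₀ hrep₀ (hw.trans hw₀.symm)
      (hle.trans (hw ▸ hE.ge)) (hle₀.trans (hw ▸ hE.ge))
  have hSw : ∫⁻ t in Icc 0 1, ‖Sw' t‖ₑ ^ p = interpolantEnergy p x w := by
    rw [← hx0, ← hx1]
    exact setLIntegral_Icc_eq_interpolantEnergy hmono.monotone hSw'
  have hlt := eLpNorm_lt_one_of_lintegral_enorm_rpow_lt_one hp0 (hSw ▸ hE_lt)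
  exact ⟨hlt, sub_pos.2 (toReal_lt_of_lt_ofReal (by simpa using hlt))⟩

/-- If `K_w ≠ ∅` and `R(K_w) > 0`, the derivative `S_w'` of the piecewise-linear
interpolant of the data satisfies the strict inequality `‖S_w'‖_{L_p[0,1]} < 1`;
in particular `Λ := 1 − ‖S_w'‖_{L_p[0,1]} > 0`. -/
theorem stmt_16
    (p : ℝ) (hp1 : 1 < p) (hp2 : p ≤ 2)
    {n : ℕ} (hn : 0 < n) (x : Fin (n + 1) → ℝ)
    (hmono : StrictMono x) (hx0 : x 0 = 0) (hx1 : x (Fin.last n) = 1)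
    (w : Fin (n + 1) → ℝ)
    (hne : ({f ∈ modelK p | ∀ j, f (x j) = w j}).Nonempty)
    (hR : 0 < L2cheb {f ∈ modelK p | ∀ j, f (x j) = w j})
    (Sw' : ℝ → ℝ)
    (hSw' : ∀ j : Fin n, ∀ t ∈ Ioo (x j.castSucc) (x j.succ),
      Sw' t = (w j.succ - w j.castSucc) / (x j.succ - x j.castSucc)) :
    eLpNorm Sw' (ENNReal.ofReal p) (volume.restrict (Icc 0 1)) < 1 ∧
    0 < 1 - (eLpNorm Sw' (ENNReal.ofReal p) (volume.restrict (Icc 0 1))).toReal :=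
  stmt_16_general p hp1 x hmono hx0 hx1 w hne hR Sw' hSw'
end
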